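/- In the synthetic setup, a class α ∈ H_BC(X) lies in Pos(X) if and only if for each finite-dimensional linear subspace V ⊆ 𝒵 there exists a representative ω ∈ 𝒵₊ of α such that V ⊆ 𝒵_ω. -/

import Mathlib

open scoped BigOperators
noncomputable section

/-- The synthetic pluripotential-theoretic setup of Boucksom–Jonsson. -/
structure PPSetup where
  /-- the compact Hausdorff topological space -/
  X : Type
  [topX : TopologicalSpace X]
  [cptX : CompactSpace X]
  [t2X : T2Space X]
  /-- the dense space of test functions -/
  D : Submodule ℝ C(X, ℝ)
  D_dense : Dense (D : Set C(X, ℝ))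
  D_const : ∀ c : ℝ, ContinuousMap.const X c ∈ D
  /-- the space of closed (1,1)-forms, a partially ordered real vector space -/
  Z : Type
  [zGroup : AddCommGroup Z]
  [zOrder : PartialOrder Z]
  [zOrdGroup : IsOrderedAddMonoid Z]
  [zModule : Module ℝ Z]
  [zSMul : PosSMulStrictMono ℝ Z]
  [zSMulReflect : PosSMulReflectLT ℝ Z]
  /-- the positive cone spans Z -/
  pos_spans : Submodule.span ℝ {θ : Z | 0 ≤ θ} = ⊤
  /-- the positive cone is closed in the finest vector space topology -/
  pos_closed : ∀ (k : ℕ) (u : (Fin k → ℝ) →ₗ[ℝ] Z), IsClosed {x : Fin k → ℝ | 0 ≤ u x}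
  /-- the ddᶜ operator -/
  ddc : D →ₗ[ℝ] Z
  ddc_const : ∀ c : ℝ, ddc ⟨ContinuousMap.const X c, D_const c⟩ = 0
  /-- the dimension is n = m + 1 ≥ 1 -/
  m : ℕ
  /-- the wedge pairing: an n-tuple of forms yields a signed Radon measure, encoded as the
  linear functional (f ↦ ∫ f θ₁∧⋯∧θₙ) on C(X,ℝ). -/
  wedge : MultilinearMap ℝ (fun _ : Fin (m + 1) => Z) (C(X, ℝ) →ₗ[ℝ] ℝ)
  wedge_symm : ∀ (σ : Equiv.Perm (Fin (m + 1))) (θ : Fin (m + 1) → Z), wedge (θ ∘ σ) = wedge θ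
  wedge_ne : wedge ≠ 0
  wedge_pos : ∀ θ : Fin (m + 1) → Z, (∀ i, 0 ≤ θ i) → ∀ f : C(X, ℝ), 0 ≤ f → 0 ≤ wedge θ f
  hodge_symm : ∀ (θ : Fin m → Z) (φ ψ : D),
    wedge (Fin.cons (ddc ψ) θ) (φ : C(X, ℝ)) = wedge (Fin.cons (ddc φ) θ) (ψ : C(X, ℝ))
  hodge_neg : ∀ θ : Fin m → Z, (∀ i, 0 ≤ θ i) → ∀ φ : D,
    wedge (Fin.cons (ddc φ) θ) (φ : C(X, ℝ)) ≤ 0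

attribute [instance] PPSetup.topX PPSetup.cptX PPSetup.t2X PPSetup.zGroup PPSetup.zOrder
  PPSetup.zOrdGroup PPSetup.zModule PPSetup.zSMul PPSetup.zSMulReflect

namespace PPSetup

variable (S : PPSetup)

/-- the dimension -/
abbrev n : ℕ := S.m + 1

/-- the constant function 1 -/
def one : C(S.X, ℝ) := ContinuousMap.const S.X 1

/-- constants as test functions -/
def constD (c : ℝ) : S.D := ⟨ContinuousMap.const S.X c, S.D_const c⟩

/-- Bott–Chern cohomology -/
abbrev HBC := S.Z ⧸ LinearMap.range S.ddc

/-- the class of a form -/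
def cls (θ : S.Z) : S.HBC := Submodule.Quotient.mk θ

/-- the positive cone in Bott–Chern cohomology: the interior of the image of Z₊ with respect to
the finest vector space topology, described concretely as the algebraic interior. -/
def Pos : Set S.HBC :=
  {α | ∀ β : S.HBC, ∃ ε : ℝ, 0 < ε ∧ ∀ t : ℝ, |t| ≤ ε → ∃ θ : S.Z, 0 ≤ θ ∧ S.cls θ = α + t • β}

/-- θ-psh test functions -/
def psh (θ : S.Z) : Set S.D := {φ | 0 ≤ θ + S.ddc φ}

/-- the energy pairing, given by its explicit formula -/
def epair (p : Fin (S.m + 2) → S.Z × S.D) : ℝ :=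
  ∑ i : Fin (S.m + 2),
    S.wedge (fun j : Fin (S.m + 1) =>
      if ((i.succAbove j : Fin (S.m + 2)) : ℕ) < (i : ℕ) then (p (i.succAbove j)).1
      else (p (i.succAbove j)).1 + S.ddc (p (i.succAbove j)).2)
      (((p i).2 : C(S.X, ℝ)))

/-- (ω,φ)^{n+1} -/
def epow (ω : S.Z) (φ : S.D) : ℝ := S.epair fun _ => (ω, φ)

/-- the volume ∫ ωⁿ -/
def Vol (ω : S.Z) : ℝ := S.wedge (fun _ => ω) S.one

/-- the Monge–Ampère energy E_ω(φ) = (ω,φ)^{n+1}/((n+1)V_ω) -/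
def En (ω : S.Z) (φ : S.D) : ℝ := S.epow ω φ / ((S.m + 2) * S.Vol ω)

/-- the Monge–Ampère measure MA_ω(φ) = V_ω⁻¹ (ω+ddᶜφ)ⁿ, as a functional on C(X,ℝ) -/
def MAfun (ω : S.Z) (φ : S.D) : C(S.X, ℝ) →ₗ[ℝ] ℝ := (S.Vol ω)⁻¹ • S.wedge fun _ => ω + S.ddc φ

/-- μ_ω = V_ω⁻¹ ωⁿ -/
def muOmega (ω : S.Z) : C(S.X, ℝ) →ₗ[ℝ] ℝ := (S.Vol ω)⁻¹ • S.wedge fun _ => ω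

/-- the Dirichlet functional J_ω(φ,ψ) -/
def Jfun (ω : S.Z) (φ ψ : S.D) : ℝ :=
  S.En ω φ - S.En ω ψ + S.MAfun ω φ ((ψ : C(S.X, ℝ)) - (φ : C(S.X, ℝ)))

/-- J_ω(φ) := J_ω(0,φ) = ∫φ dμ_ω − E_ω(φ) -/
def Jnorm (ω : S.Z) (φ : S.D) : ℝ := S.muOmega ω (φ : C(S.X, ℝ)) - S.En ω φ

/-- probability measures, encoded as positive normalized functionals on C(X,ℝ) -/
def isProb (μ : C(S.X, ℝ) →ₗ[ℝ] ℝ) : Prop :=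
  (∀ f : C(S.X, ℝ), 0 ≤ f → 0 ≤ μ f) ∧ μ S.one = 1

/-- the space 𝓜 of Radon probability measures -/
abbrev M := {μ : C(S.X, ℝ) →ₗ[ℝ] ℝ // S.isProb μ}

/-- the defining set for the energy J_ω(μ) -/
def Jset (ω : S.Z) (μ : C(S.X, ℝ) →ₗ[ℝ] ℝ) : Set ℝ :=
  {x | ∃ φ ∈ S.psh ω, x = S.En ω φ - μ (φ : C(S.X, ℝ))}

/-- μ has finite energy: J_ω(μ) < ∞ -/
def finEnergy (ω : S.Z) (μ : C(S.X, ℝ) →ₗ[ℝ] ℝ) : Prop := BddAbove (S.Jset ω μ)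

/-- the energy J_ω(μ) of a measure -/
def Jmes (ω : S.Z) (μ : C(S.X, ℝ) →ₗ[ℝ] ℝ) : ℝ := sSup (S.Jset ω μ)

/-- the relative energy J_ω(μ,ψ) -/
def JmesRel (ω : S.Z) (μ : C(S.X, ℝ) →ₗ[ℝ] ℝ) (ψ : S.D) : ℝ :=
  sSup {x | ∃ φ ∈ S.psh ω, x = S.En ω φ - S.En ω ψ + μ ((ψ : C(S.X, ℝ)) - (φ : C(S.X, ℝ)))}

/-- the space 𝓜¹_ω of measures of finite energy -/
abbrev M1 (ω : S.Z) := {μ : S.M // S.finEnergy ω μ.1}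

/-- the weak topology on 𝓜 -/
def weakTop : TopologicalSpace S.M :=
  TopologicalSpace.induced (fun μ (f : C(S.X, ℝ)) => μ.1 f) inferInstance

/-- the strong topology on 𝓜¹_ω: coarsest refinement of the weak topology making J_ω continuous -/
def strongTop (ω : S.Z) : TopologicalSpace (S.M1 ω) :=
  (TopologicalSpace.induced (fun μ : S.M1 ω => μ.1) S.weakTop) ⊓
    TopologicalSpace.induced (fun μ : S.M1 ω => S.Jmes ω μ.1.1) inferInstance

/-- the defining set for T_ω -/
def Tset (ω : S.Z) : Set ℝ :=
  {x | ∃ φ ∈ S.psh ω, x = (⨆ p : S.X, (φ : C(S.X, ℝ)) p) - S.muOmega ω (φ : C(S.X, ℝ))}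

/-- the submean value property for ω: T_ω < ∞ -/
def submeanBdd (ω : S.Z) : Prop := BddAbove (S.Tset ω)

/-- T_ω -/
def Tsup (ω : S.Z) : ℝ := sSup (S.Tset ω)

/-- commensurability of two semipositive forms: finite Thompson distance -/
def commensurable (ω ω' : S.Z) : Prop :=
  ∃ δ : ℝ, 0 ≤ δ ∧ Real.exp (-δ) • ω ≤ ω' ∧ ω' ≤ Real.exp δ • ω

/-- the Thompson distance -/
def dT (ω ω' : S.Z) : ℝ :=
  sInf {δ : ℝ | 0 ≤ δ ∧ Real.exp (-δ) • ω ≤ ω' ∧ ω' ≤ Real.exp δ • ω}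

/-- θ is ω-bounded, i.e. ‖θ‖_ω < ∞ -/
def bddBy (ω θ : S.Z) : Prop := ∃ C : ℝ, 0 ≤ C ∧ -(C • ω) ≤ θ ∧ θ ≤ C • ω

/-- ‖θ‖_ω -/
def znorm (ω θ : S.Z) : ℝ := sInf {C : ℝ | 0 ≤ C ∧ -(C • ω) ≤ θ ∧ θ ≤ C • ω}

/-- 𝒟_ω admits maxima -/
def admitsMaxima (ω : S.Z) : Prop :=
  ∀ φ ∈ S.psh ω, ∀ ψ ∈ S.psh ω, ∀ f : S.D,
    (∀ x : S.X, max ((φ : C(S.X, ℝ)) x) ((ψ : C(S.X, ℝ)) x) < (f : C(S.X, ℝ)) x) →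
    ∃ τ ∈ S.psh ω,
      (∀ x : S.X, max ((φ : C(S.X, ℝ)) x) ((ψ : C(S.X, ℝ)) x) ≤ (τ : C(S.X, ℝ)) x) ∧
      ∀ x : S.X, (τ : C(S.X, ℝ)) x < (f : C(S.X, ℝ)) x

/-- the orthogonality property for ω -/
def orthogonal (ω : S.Z) : Prop :=
  S.admitsMaxima ω ∧
    ∀ f : S.D, ∀ ε : ℝ, 0 < ε →
      ∃ φ₀ ∈ S.psh ω, (∀ x : S.X, (φ₀ : C(S.X, ℝ)) x < (f : C(S.X, ℝ)) x) ∧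
        ∀ φ ∈ S.psh ω, (∀ x : S.X, (φ₀ : C(S.X, ℝ)) x ≤ (φ : C(S.X, ℝ)) x) →
          (∀ x : S.X, (φ : C(S.X, ℝ)) x < (f : C(S.X, ℝ)) x) →
          S.MAfun ω φ ((f : C(S.X, ℝ)) - (φ : C(S.X, ℝ))) ≤ ε

/-- the extended energy Ẽ_ω(f) for f ∈ C⁰(X) -/
def EnExt (ω : S.Z) (f : C(S.X, ℝ)) : ℝ :=
  sSup {x | ∃ φ ∈ S.psh ω, (φ : C(S.X, ℝ)) ≤ f ∧ x = S.En ω φ}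

/-- the metric dd_ω on measures -/
def ddMetric (ω : S.Z) (μ ν : C(S.X, ℝ) →ₗ[ℝ] ℝ) : ℝ :=
  sSup {x | ∃ φ ∈ S.psh ω, S.Jnorm ω φ ≤ 1 ∧ x = |μ (φ : C(S.X, ℝ)) - ν (φ : C(S.X, ℝ))|}

/-- the characterizing property of the Dirichlet quasi-metric d_ω on 𝓜¹_ω -/
def isDirichlet (ω : S.Z) (d : S.M1 ω → S.M1 ω → ℝ) : Prop :=
  (∀ μ ν, 0 ≤ d μ ν) ∧
  (@Continuous (S.M1 ω × S.M1 ω) ℝ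
    (@instTopologicalSpaceProd _ _ (S.strongTop ω) (S.strongTop ω)) _ fun p => d p.1 p.2) ∧
  ∀ φ ∈ S.psh ω, ∀ ψ ∈ S.psh ω, ∀ μ ν : S.M1 ω,
    μ.1.1 = S.MAfun ω φ → ν.1.1 = S.MAfun ω ψ → d μ ν = S.Jfun ω φ ψ

/-- the characterizing property of the θ-twisted energy J_ω^θ on 𝓜¹ -/
def isTwisted (ω θ : S.Z) (Jt : S.M1 ω → ℝ) : Prop :=
  (@Continuous _ _ (S.strongTop ω) _ Jt) ∧
  ∀ φ ∈ S.psh ω, ∀ ν : S.M1 ω, ν.1.1 = S.MAfun ω φ →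
    Jt ν = deriv (fun t : ℝ => S.En (ω + t • θ) φ) 0

end PPSetup

namespace PPSetup

variable (S : PPSetup)

lemma bddBy_neg {ω θ : S.Z} (h : S.bddBy ω θ) : S.bddBy ω (-θ) := by
  obtain ⟨C, hC, h1, h2⟩ := h
  exact ⟨C, hC, by simpa using neg_le_neg h2, by simpa using neg_le_neg h1⟩

lemma bddBy_smul {ω θ : S.Z} {a : ℝ} (ha : 0 ≤ a) (h : S.bddBy ω θ) : S.bddBy ω (a • θ) := by
  obtain ⟨C, hC, h1, h2⟩ := h
  refine ⟨a * C, mul_nonneg ha hC, ?_, ?_⟩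
  · have := smul_le_smul_of_nonneg_left h1 ha
    simpa [smul_smul, smul_neg] using this
  · have := smul_le_smul_of_nonneg_left h2 ha
    simpa [smul_smul] using this

lemma bddBy_add {ω θ₁ θ₂ : S.Z} (h1 : S.bddBy ω θ₁) (h2 : S.bddBy ω θ₂) :
    S.bddBy ω (θ₁ + θ₂) := by
  obtain ⟨C1, hC1, ha1, hb1⟩ := h1
  obtain ⟨C2, hC2, ha2, hb2⟩ := h2
  refine ⟨C1 + C2, by positivity, ?_, ?_⟩
  · have h := add_le_add ha1 ha2
    have he : -((C1 + C2) • ω) = -(C1 • ω) + -(C2 • ω) := by rw [add_smul]; abel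
    rw [he]; exact h
  · have h := add_le_add hb1 hb2
    rw [add_smul]; exact h

/-- the submodule of ω-bounded forms -/
def bddSub (ω : S.Z) : Submodule ℝ S.Z where
  carrier := {θ | S.bddBy ω θ}
  zero_mem' := ⟨0, le_rfl, by simp, by simp⟩
  add_mem' := fun h1 h2 => S.bddBy_add h1 h2
  smul_mem' := fun c θ h => by
    rcases le_or_gt 0 c with hc | hc
    · exact S.bddBy_smul hc h
    · have hcθ : c • θ = (-c) • (-θ) := by simp
      rw [hcθ]
      exact S.bddBy_smul (by linarith) (S.bddBy_neg h)

lemma exists_decomp (θ : S.Z) : ∃ p q : S.Z, 0 ≤ p ∧ 0 ≤ q ∧ θ = p - q := by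
  have hmem : θ ∈ Submodule.span ℝ {θ : S.Z | 0 ≤ θ} := by
    rw [S.pos_spans]; trivial
  induction hmem using Submodule.span_induction with
  | mem x hx => exact ⟨x, 0, hx, le_rfl, by simp⟩
  | zero => exact ⟨0, 0, le_rfl, le_rfl, by simp⟩
  | add x y _ _ hx hy =>
      obtain ⟨p, q, hp, hq, rfl⟩ := hx
      obtain ⟨p', q', hp', hq', rfl⟩ := hy
      exact ⟨p + p', q + q', add_nonneg hp hp', add_nonneg hq hq', by abel⟩
  | smul c x _ hx =>
      obtain ⟨p, q, hp, hq, rfl⟩ := hx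
      rcases le_or_gt 0 c with hc | hc
      · exact ⟨c • p, c • q, smul_nonneg hc hp, smul_nonneg hc hq, by rw [smul_sub]⟩
      · refine ⟨(-c) • q, (-c) • p, smul_nonneg (by linarith) hq,
          smul_nonneg (by linarith) hp, ?_⟩
        module

end PPSetup

/-- A class α ∈ H_BC(X) lies in Pos(X) iff for each finite-dimensional linear
subspace V ⊆ 𝒵 there is a representative ω ∈ 𝒵₊ of α with V ⊆ 𝒵_ω. -/
theorem statement1 (S : PPSetup) (α : S.HBC) :
    α ∈ S.Pos ↔
      ∀ V : Submodule ℝ S.Z, FiniteDimensional ℝ V →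
        ∃ ω : S.Z, 0 ≤ ω ∧ S.cls ω = α ∧ ∀ θ ∈ V, S.bddBy ω θ := by
  constructor
  · -- forward direction
    intro hα V hV
    obtain ⟨s, hs⟩ := Module.Finite.iff_fg.mp hV
    choose p q hp hq hpq using fun x : S.Z => S.exists_decomp x
    set γ : S.Z := ∑ x ∈ s, (p x + q x) with hγdef
    have hγ0 : (0:S.Z) ≤ γ := Finset.sum_nonneg fun x _ => add_nonneg (hp x) (hq x)
    have hbase : ∀ x ∈ (s : Set S.Z), S.bddBy γ x := by
      intro x hx
      have hle : p x + q x ≤ γ :=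
        Finset.single_le_sum (fun y _ => add_nonneg (hp y) (hq y)) hx
      set a := p x with ha'
      set b := q x with hb'
      have ha : (0:S.Z) ≤ a := hp x
      have hb : (0:S.Z) ≤ b := hq x
      have hab : x = a - b := hpq x
      refine ⟨1, zero_le_one, ?_, ?_⟩
      · rw [one_smul, hab]
        have h1 : -(a + b) ≤ a - b := by
          rw [← sub_nonneg]
          have he : a - b - -(a + b) = a + a := by abel
          rw [he]; exact add_nonneg ha ha
        exact le_trans (neg_le_neg hle) h1
      · rw [one_smul, hab]
        have h1 : a - b ≤ a + b := by
          rw [← sub_nonneg]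
          have he : a + b - (a - b) = b + b := by abel
          rw [he]; exact add_nonneg hb hb
        exact le_trans h1 hle
    have hVbdd : ∀ θ ∈ V, S.bddBy γ θ := by
      intro θ hθ
      have hle : V ≤ S.bddSub γ := by
        rw [← hs]; exact Submodule.span_le.mpr hbase
      exact hle hθ
    obtain ⟨ε, hε, hP⟩ := hα (S.cls γ)
    obtain ⟨ρ, hρ0, hρcls⟩ := hP (-ε) (by rw [abs_neg, abs_of_pos hε])
    refine ⟨ρ + ε • γ, add_nonneg hρ0 (smul_nonneg hε.le hγ0), ?_, ?_⟩
    · have hmk : S.cls (ρ + ε • γ) = S.cls ρ + ε • S.cls γ := by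
        simp [PPSetup.cls, ← Submodule.Quotient.mk_smul, ← Submodule.Quotient.mk_add]
      rw [hmk, hρcls]
      module
    · intro θ hθ
      obtain ⟨C, hC, h1, h2⟩ := hVbdd θ hθ
      have hkey : C • γ ≤ (C / ε) • (ρ + ε • γ) := by
        have h0 : (0:S.Z) ≤ (C / ε) • ρ := smul_nonneg (div_nonneg hC hε.le) hρ0
        have heq : (C / ε) • (ρ + ε • γ) = (C / ε) • ρ + C • γ := by
          rw [smul_add, smul_smul, div_mul_cancel₀ _ hε.ne']
        rw [heq]
        simpa using add_le_add_right h0 (C • γ)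
      exact ⟨C / ε, div_nonneg hC hε.le, le_trans (neg_le_neg hkey) h1, le_trans h2 hkey⟩
  · -- backward direction
    intro h β
    obtain ⟨b, rfl⟩ := Submodule.Quotient.mk_surjective _ β
    obtain ⟨ω, hω0, hωcls, hbdd⟩ := h (Submodule.span ℝ {b}) inferInstance
    obtain ⟨C, hC, h1, h2⟩ := hbdd b (Submodule.mem_span_singleton_self b)
    refine ⟨1 / (C + 1), by positivity, fun t ht => ?_⟩
    have hlb : -((|t| * C) • ω) ≤ t • b := by
      rcases le_or_gt 0 t with h0 | h0
      · have := smul_le_smul_of_nonneg_left h1 h0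
        rw [abs_of_nonneg h0]
        simpa [smul_smul, smul_neg] using this
      · have := smul_le_smul_of_nonpos_left h2 h0.le
        rw [abs_of_neg h0]
        simpa [smul_smul, neg_smul, neg_mul] using this
    refine ⟨ω + t • b, ?_, ?_⟩
    · have hcoef : 0 ≤ 1 - |t| * C := by
        have habs : |t| ≤ 1 / (C + 1) := ht
        have h3 : |t| * C ≤ (1 / (C + 1)) * C :=
          mul_le_mul_of_nonneg_right habs hC
        have h4 : (1 / (C + 1)) * C ≤ 1 := by
          rw [div_mul_eq_mul_div, one_mul, div_le_one (by linarith)]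
          linarith
        linarith
      calc (0:S.Z) ≤ (1 - |t| * C) • ω := smul_nonneg hcoef hω0
        _ = ω + -((|t| * C) • ω) := by rw [sub_smul, one_smul, sub_eq_add_neg]
        _ ≤ ω + t • b := add_le_add_right hlb ω
    · have hmk : S.cls (ω + t • b) = S.cls ω + t • S.cls b := by
        simp [PPSetup.cls, ← Submodule.Quotient.mk_smul, ← Submodule.Quotient.mk_add]
      rw [hmk, hωcls]
      rfl
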